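/- Let X, Z ∈ ℝ^{n×d} and Σ ∈ ℝ^{d×d} positive semidefinite with X = Z Σ^{1/2}, and set Σ̂ := (1/n) XᵀX. If d ≤ n, then for every i ∈ [d], |λ_i(Σ̂) − λ_i(Σ)| ≤ λ_i(Σ) · ‖(1/n) ZᵀZ − I_d‖₂. -/

import Mathlib

open Matrix

/-- The `i`-th largest eigenvalue (index `0` is the largest) of a Hermitian matrix. -/
noncomputable def eigDesc {K : Type*} [RCLike K] {m : ℕ} {A : Matrix (Fin m) (Fin m) K}
    (hA : A.IsHermitian) (i : Fin m) : ℝ :=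
  hA.eigenvalues (Tuple.sort hA.eigenvalues i.rev)

/-- The spectral norm (ℓ² operator norm) of a real square matrix. -/
noncomputable def specNorm {m : ℕ} (A : Matrix (Fin m) (Fin m) ℝ) : ℝ :=
  ‖Matrix.toEuclideanCLM (𝕜 := ℝ) A‖

lemma real_gram_isHermitian {n d : ℕ} (c : ℝ) (X : Matrix (Fin n) (Fin d) ℝ) :
    (c • (Xᵀ * X)).IsHermitian := by
  have h := Matrix.isHermitian_conjTranspose_mul_self X
  rw [Matrix.conjTranspose_eq_transpose_of_trivial] at h
  simp [Matrix.IsHermitian, Matrix.conjTranspose_smul, h.eq]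

open scoped ComplexOrder in
/-- The square root of a positive semidefinite matrix, as `Matrix.PosSemidef.sqrt` was defined
in the older Mathlib (since removed in favour of `CFC.sqrt`). -/
noncomputable def Matrix.PosSemidef.sqrt {n : Type*} [Fintype n] [DecidableEq n] {𝕜 : Type*} [RCLike 𝕜]
    {A : Matrix n n 𝕜} (hA : A.PosSemidef) : Matrix n n 𝕜 :=
  hA.1.eigenvectorUnitary.1 * diagonal ((↑) ∘ (√·) ∘ hA.1.eigenvalues) *
  (star hA.1.eigenvectorUnitary : Matrix n n 𝕜)

/-! Write `R = Σ^{1/2}` and `M = (1/n) ZᵀZ`, so that `Σ̂ = R M R` and `Σ = R R`. For every `v`,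
`⟪Σ̂ v, v⟫ - ⟪Σ v, v⟫ = ⟪(M - 1) R v, R v⟫`, which is at most `t ‖R v‖² = t ⟪Σ v, v⟫` in absolute
value, `t = ‖M - 1‖₂`. Hence `(1 - t) Σ ≤ Σ̂ ≤ (1 + t) Σ` as quadratic forms, and the
Courant–Fischer principle transfers this to the `i`-th eigenvalues: a nonzero vector in the span of
the top `i + 1` eigenvectors of one form and the bottom `d - i` eigenvectors of the other exists by
counting dimensions. For `t > 1` the lower bound is just `Σ̂ ⪰ 0`. -/

open Module Submodule
open scoped RealInnerProductSpace

theorem Submodule.exists_mem_mem_ne_zero_of_finrank_lt {K V : Type*} [DivisionRing K]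
    [AddCommGroup V] [Module K V] [FiniteDimensional K V] {p q : Submodule K V}
    (h : finrank K V < finrank K p + finrank K q) : ∃ v ∈ p, v ∈ q ∧ v ≠ 0 := by
  by_contra! hpq
  exact h.not_ge (finrank_add_finrank_le_of_disjoint (disjoint_def.mpr hpq))

theorem OrthonormalBasis.repr_apply_eq_zero_of_mem_span_image {ι 𝕜 E : Type*} [Fintype ι]
    [RCLike 𝕜] [NormedAddCommGroup E] [InnerProductSpace 𝕜 E] (b : OrthonormalBasis ι 𝕜 E)
    {s : Set ι} {v : E} (hv : v ∈ span 𝕜 (b '' s)) {j : ι} (hj : j ∉ s) : b.repr v j = 0 := by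
  rw [← b.coe_toBasis, b.toBasis.mem_span_image] at hv
  simpa using Finsupp.notMem_support_iff.mp (mt (@hv j) hj)

theorem OrthonormalBasis.finrank_span_image {ι 𝕜 E : Type*} [Fintype ι]
    [RCLike 𝕜] [NormedAddCommGroup E] [InnerProductSpace 𝕜 E] (b : OrthonormalBasis ι 𝕜 E)
    (s : Finset ι) : finrank 𝕜 (span 𝕜 (b '' s)) = s.card := by
  rw [Set.image_eq_range]
  exact (finrank_span_eq_card (b.orthonormal.linearIndependent.comp _ Subtype.val_injective)).trans
    (by simp)

theorem Tuple.comp_equiv_sort_rev_of_antitone {α : Type*} [LinearOrder α] {m d : ℕ} (h : m = d)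
    {f : Fin m → α} (hf : Antitone f) (e : Fin d ≃ Fin m) (i : Fin d) :
    (f ∘ e) (Tuple.sort (f ∘ e) i.rev) = f (Fin.cast h.symm i) := by
  subst h
  have hg : Monotone (f ∘ Fin.revPerm) := hf.comp Fin.rev_anti
  have key : (f ∘ e) ∘ Tuple.sort (f ∘ e) = f ∘ Fin.revPerm := by
    rw [show f ∘ e = (f ∘ Fin.revPerm) ∘ (e.trans Fin.revPerm.symm : Equiv.Perm _) by
      ext j; simp,
      Tuple.comp_perm_comp_sort_eq_comp_sort, Tuple.sort_eq_refl_iff_monotone.mpr hg]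
    rfl
  simpa using congrFun key i.rev

namespace LinearMap.IsSymmetric

variable {E : Type*} [NormedAddCommGroup E] [InnerProductSpace ℝ E] [FiniteDimensional ℝ E]
  {T U : E →ₗ[ℝ] E} {n : ℕ} (hT : T.IsSymmetric) (hU : U.IsSymmetric) (hn : finrank ℝ E = n)

include hT in
theorem eigenvalues_eq_eigenvalues_cast {m : ℕ} (hm : finrank ℝ E = m) (i : Fin n) :
    hT.eigenvalues hn i = hT.eigenvalues hm (Fin.cast (hn.symm.trans hm) i) := by
  subst hn hm
  rfl

include hT in
theorem inner_apply_self_sub_eq_sum (r : ℝ) (v : E) :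
    ⟪T v, v⟫ - r * ‖v‖ ^ 2 =
      ∑ j, (hT.eigenvalues hn j - r) * (hT.eigenvectorBasis hn).repr v j ^ 2 := by
  rw [← (hT.eigenvectorBasis hn).repr.inner_map_map, ← (hT.eigenvectorBasis hn).repr.norm_map,
    EuclideanSpace.norm_sq_eq, EuclideanSpace.inner_eq_star_dotProduct]
  simp only [dotProduct, hT.eigenvectorBasis_apply_self_apply, star_trivial, Real.norm_eq_abs,
    sq_abs, RCLike.ofReal_real_eq_id, id_eq, Finset.mul_sum, ← Finset.sum_sub_distrib]
  exact Finset.sum_congr rfl fun j _ => by ring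

include hT in
theorem inner_apply_self_le_of_mem_span {s : Set (Fin n)} {r : ℝ}
    (hr : ∀ j ∈ s, hT.eigenvalues hn j ≤ r) {v : E}
    (hv : v ∈ span ℝ (hT.eigenvectorBasis hn '' s)) : ⟪T v, v⟫ ≤ r * ‖v‖ ^ 2 := by
  rw [← sub_nonpos, hT.inner_apply_self_sub_eq_sum hn]
  refine Finset.sum_nonpos fun j _ => ?_
  by_cases hj : j ∈ s
  · exact mul_nonpos_of_nonpos_of_nonneg (sub_nonpos.mpr (hr j hj)) (sq_nonneg _)
  · simp [(hT.eigenvectorBasis hn).repr_apply_eq_zero_of_mem_span_image hv hj]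

include hT in
theorem mul_norm_sq_le_inner_apply_self_of_mem_span {s : Set (Fin n)} {r : ℝ}
    (hr : ∀ j ∈ s, r ≤ hT.eigenvalues hn j) {v : E}
    (hv : v ∈ span ℝ (hT.eigenvectorBasis hn '' s)) : r * ‖v‖ ^ 2 ≤ ⟪T v, v⟫ := by
  rw [← sub_nonneg, hT.inner_apply_self_sub_eq_sum hn]
  refine Finset.sum_nonneg fun j _ => ?_
  by_cases hj : j ∈ s
  · exact mul_nonneg (sub_nonneg.mpr (hr j hj)) (sq_nonneg _)
  · simp [(hT.eigenvectorBasis hn).repr_apply_eq_zero_of_mem_span_image hv hj]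

include hT hU in
theorem exists_ne_zero_mem_span_Iic_mem_span_Ici (i : Fin n) :
    ∃ v ∈ span ℝ (hT.eigenvectorBasis hn '' Set.Iic i),
      v ∈ span ℝ (hU.eigenvectorBasis hn '' Set.Ici i) ∧ v ≠ 0 := by
  apply exists_mem_mem_ne_zero_of_finrank_lt
  rw [← Finset.coe_Iic, ← Finset.coe_Ici, OrthonormalBasis.finrank_span_image,
    OrthonormalBasis.finrank_span_image, Fin.card_Iic, Fin.card_Ici, hn]
  omega

include hT hU in
theorem eigenvalues_le_mul_of_inner_le {c : ℝ} (hc : 0 ≤ c) (h : ∀ v, ⟪T v, v⟫ ≤ c * ⟪U v, v⟫)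
    (i : Fin n) : hT.eigenvalues hn i ≤ c * hU.eigenvalues hn i := by
  obtain ⟨v, hvT, hvU, hv0⟩ := exists_ne_zero_mem_span_Iic_mem_span_Ici hT hU hn i
  have hTv := hT.mul_norm_sq_le_inner_apply_self_of_mem_span hn
    (fun j hj => hT.eigenvalues_antitone hn hj) hvT
  have hUv := hU.inner_apply_self_le_of_mem_span hn (fun j hj => hU.eigenvalues_antitone hn hj) hvU
  refine le_of_mul_le_mul_right ?_ (by positivity : 0 < ‖v‖ ^ 2)
  calc hT.eigenvalues hn i * ‖v‖ ^ 2 ≤ ⟪T v, v⟫ := hTv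
    _ ≤ c * ⟪U v, v⟫ := h v
    _ ≤ c * (hU.eigenvalues hn i * ‖v‖ ^ 2) := mul_le_mul_of_nonneg_left hUv hc
    _ = c * hU.eigenvalues hn i * ‖v‖ ^ 2 := by ring

include hT hU in
theorem mul_eigenvalues_le_of_mul_inner_le {c : ℝ} (hc : 0 ≤ c)
    (h : ∀ v, c * ⟪U v, v⟫ ≤ ⟪T v, v⟫) (i : Fin n) :
    c * hU.eigenvalues hn i ≤ hT.eigenvalues hn i := by
  obtain ⟨v, hvU, hvT, hv0⟩ := exists_ne_zero_mem_span_Iic_mem_span_Ici hU hT hn i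
  have hUv := hU.mul_norm_sq_le_inner_apply_self_of_mem_span hn
    (fun j hj => hU.eigenvalues_antitone hn hj) hvU
  have hTv := hT.inner_apply_self_le_of_mem_span hn (fun j hj => hT.eigenvalues_antitone hn hj) hvT
  refine le_of_mul_le_mul_right ?_ (by positivity : 0 < ‖v‖ ^ 2)
  calc c * hU.eigenvalues hn i * ‖v‖ ^ 2 = c * (hU.eigenvalues hn i * ‖v‖ ^ 2) := by ring
    _ ≤ c * ⟪U v, v⟫ := mul_le_mul_of_nonneg_left hUv hc
    _ ≤ ⟪T v, v⟫ := h v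
    _ ≤ hT.eigenvalues hn i * ‖v‖ ^ 2 := hTv

end LinearMap.IsSymmetric

namespace ContinuousLinearMap

theorem abs_inner_conj_sub_le {E : Type*} [NormedAddCommGroup E] [InnerProductSpace ℝ E]
    {r : E →L[ℝ] E} (hr : (r : E →ₗ[ℝ] E).IsSymmetric) (m : E →L[ℝ] E) (v : E) :
    |⟪(r * m * r) v, v⟫ - ⟪(r * r) v, v⟫| ≤ ‖m - 1‖ * ⟪(r * r) v, v⟫ := by
  have hsq : ⟪(r * r) v, v⟫ = ‖r v‖ ^ 2 := by
    rw [mul_apply_eq_comp, ← coe_coe, hr, real_inner_self_eq_norm_sq]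
  have hconj : ⟪(r * m * r) v, v⟫ - ⟪(r * r) v, v⟫ = ⟪(m - 1) (r v), r v⟫ := by
    rw [hsq, ← real_inner_self_eq_norm_sq, _root_.sub_apply, one_apply_eq_self, inner_sub_left,
      mul_apply_eq_comp, mul_apply_eq_comp, ← coe_coe, hr, coe_coe]
  rw [hconj, hsq]
  calc |⟪(m - 1) (r v), r v⟫| ≤ ‖(m - 1) (r v)‖ * ‖r v‖ := abs_real_inner_le_norm _ _
    _ ≤ ‖m - 1‖ * ‖r v‖ * ‖r v‖ := by gcongr; exact le_opNorm _ _
    _ = ‖m - 1‖ * ‖r v‖ ^ 2 := by ring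

end ContinuousLinearMap

namespace Matrix

variable {d : ℕ}

-- `hA.eigenvalues` rearranges the antitone `hA.eigenvalues₀`, so sorting it recovers the latter.
theorem IsHermitian.eigDesc_eq_eigenvalues {A : Matrix (Fin d) (Fin d) ℝ} (hA : A.IsHermitian)
    (i : Fin d) :
    eigDesc hA i =
      (isSymmetric_toEuclideanLin_iff.mpr hA).eigenvalues finrank_euclideanSpace_fin i := by
  rw [eigDesc, (isSymmetric_toEuclideanLin_iff.mpr hA).eigenvalues_eq_eigenvalues_cast
    finrank_euclideanSpace_fin finrank_euclideanSpace]
  exact Tuple.comp_equiv_sort_rev_of_antitone (Fintype.card_fin d) hA.eigenvalues₀_antitone _ i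

namespace IsHermitian

variable {A B : Matrix (Fin d) (Fin d) ℝ} (hA : A.IsHermitian) (hB : B.IsHermitian)

include hA hB in
theorem eigDesc_le_mul_of_inner_le {c : ℝ} (hc : 0 ≤ c)
    (h : ∀ v, ⟪toEuclideanLin A v, v⟫ ≤ c * ⟪toEuclideanLin B v, v⟫) (i : Fin d) :
    eigDesc hA i ≤ c * eigDesc hB i := by
  simpa only [eigDesc_eq_eigenvalues] using
    (isSymmetric_toEuclideanLin_iff.mpr hA).eigenvalues_le_mul_of_inner_le
      (isSymmetric_toEuclideanLin_iff.mpr hB) finrank_euclideanSpace_fin hc h i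

include hA hB in
theorem mul_eigDesc_le_of_mul_inner_le {c : ℝ} (hc : 0 ≤ c)
    (h : ∀ v, c * ⟪toEuclideanLin B v, v⟫ ≤ ⟪toEuclideanLin A v, v⟫) (i : Fin d) :
    c * eigDesc hB i ≤ eigDesc hA i := by
  simpa only [eigDesc_eq_eigenvalues] using
    (isSymmetric_toEuclideanLin_iff.mpr hA).mul_eigenvalues_le_of_mul_inner_le
      (isSymmetric_toEuclideanLin_iff.mpr hB) finrank_euclideanSpace_fin hc h i

end IsHermitian

theorem posSemidef_smul_transpose_mul_self {m k : Type*} [Fintype m] [Fintype k] {c : ℝ}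
    (hc : 0 ≤ c) (X : Matrix m k ℝ) : (c • (Xᵀ * X)).PosSemidef := by
  simpa [conjTranspose_eq_transpose_of_trivial] using (posSemidef_conjTranspose_mul_self X).smul hc

theorem PosSemidef.eigDesc_nonneg {A : Matrix (Fin d) (Fin d) ℝ} (hA : A.PosSemidef)
    (i : Fin d) : 0 ≤ eigDesc hA.1 i :=
  hA.eigenvalues_nonneg _

theorem PosSemidef.isHermitian_sqrt {ι : Type*} [Fintype ι] [DecidableEq ι] {S : Matrix ι ι ℝ}
    (hS : S.PosSemidef) : hS.sqrt.IsHermitian := by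
  simp only [PosSemidef.sqrt, IsHermitian, conjTranspose_mul, diagonal_conjTranspose,
    star_eq_conjTranspose, conjTranspose_conjTranspose, Matrix.mul_assoc, star_trivial]

theorem PosSemidef.sqrt_mul_self {ι : Type*} [Fintype ι] [DecidableEq ι] {S : Matrix ι ι ℝ}
    (hS : S.PosSemidef) : hS.sqrt * hS.sqrt = S := by
  conv_rhs => rw [hS.1.spectral_theorem, Unitary.conjStarAlgAut_apply]
  simp only [PosSemidef.sqrt, Matrix.mul_assoc]
  rw [← Matrix.mul_assoc (star _ : Matrix _ _ ℝ) _ _, Unitary.coe_star_mul_self, Matrix.one_mul,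
    ← Matrix.mul_assoc (diagonal _), diagonal_mul_diagonal]
  congr 3
  funext j
  simp [Real.mul_self_sqrt (hS.eigenvalues_nonneg j)]

theorem PosSemidef.abs_inner_gram_mul_sqrt_sub_le {n : ℕ} {S : Matrix (Fin d) (Fin d) ℝ}
    (hS : S.PosSemidef) (Z : Matrix (Fin n) (Fin d) ℝ) (c : ℝ) (v : EuclideanSpace ℝ (Fin d)) :
    |⟪toEuclideanLin (c • ((Z * hS.sqrt)ᵀ * (Z * hS.sqrt))) v, v⟫ - ⟪toEuclideanLin S v, v⟫| ≤
      specNorm (c • (Zᵀ * Z) - 1) * ⟪toEuclideanLin S v, v⟫ := by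
  have hR := hS.isHermitian_sqrt
  have hgram : c • ((Z * hS.sqrt)ᵀ * (Z * hS.sqrt)) = hS.sqrt * (c • (Zᵀ * Z)) * hS.sqrt := by
    rw [transpose_mul, ← conjTranspose_eq_transpose_of_trivial hS.sqrt, hR.eq]
    simp only [Matrix.mul_smul, Matrix.smul_mul, Matrix.mul_assoc]
  have := ContinuousLinearMap.abs_inner_conj_sub_le (r := toEuclideanCLM (𝕜 := ℝ) hS.sqrt)
    (isSymmetric_toEuclideanLin_iff.mpr hR) (toEuclideanCLM (𝕜 := ℝ) (c • (Zᵀ * Z))) v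
  rwa [← map_mul, ← map_mul, ← map_mul, ← hgram, hS.sqrt_mul_self,
    ← map_one (toEuclideanCLM (𝕜 := ℝ)), ← map_sub] at this

end Matrix

theorem relative_deviation_low_dim_general {n d : ℕ}
    (X Z : Matrix (Fin n) (Fin d) ℝ) {S : Matrix (Fin d) (Fin d) ℝ} (hS : S.PosSemidef)
    (hX : X = Z * hS.sqrt) (i : Fin d) :
    |eigDesc (real_gram_isHermitian ((1 : ℝ) / n) X) i - eigDesc hS.1 i| ≤
      eigDesc hS.1 i * specNorm (((1 : ℝ) / n) • (Zᵀ * Z) - 1) := by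
  set t := specNorm (((1 : ℝ) / n) • (Zᵀ * Z) - 1)
  have hquad := hS.abs_inner_gram_mul_sqrt_sub_le Z ((1 : ℝ) / n)
  rw [← hX] at hquad
  have ht : 0 ≤ t := norm_nonneg _
  have hS_nonneg := hS.eigDesc_nonneg i
  have hgram_nonneg :=
    (posSemidef_smul_transpose_mul_self (by positivity : (0 : ℝ) ≤ 1 / n) X).eigDesc_nonneg i
  have hup := (real_gram_isHermitian ((1 : ℝ) / n) X).eigDesc_le_mul_of_inner_le
    hS.1 (by linarith : 0 ≤ 1 + t) (fun v => by linarith [(abs_le.mp (hquad v)).2]) i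
  have hlow : (1 - t) * eigDesc hS.1 i ≤ eigDesc (real_gram_isHermitian ((1 : ℝ) / n) X) i := by
    rcases le_total t 1 with ht1 | ht1
    · exact (real_gram_isHermitian ((1 : ℝ) / n) X).mul_eigDesc_le_of_mul_inner_le
        hS.1 (by linarith) (fun v => by linarith [(abs_le.mp (hquad v)).1]) i
    · nlinarith
  rw [abs_le]
  constructor <;> nlinarith

/-- Low-dimensional relative deviation bound: if `X = Z Σ^{1/2}` with `Σ ⪰ 0` and `d ≤ n`,
then for every `i`, `|λ_i((1/n) XᵀX) − λ_i(Σ)| ≤ λ_i(Σ) ‖(1/n) ZᵀZ − I_d‖₂`. -/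
theorem relative_deviation_low_dim {n d : ℕ} (hdn : d ≤ n)
    (X Z : Matrix (Fin n) (Fin d) ℝ) {S : Matrix (Fin d) (Fin d) ℝ} (hS : S.PosSemidef)
    (hX : X = Z * hS.sqrt) (i : Fin d) :
    |eigDesc (real_gram_isHermitian ((1 : ℝ) / n) X) i - eigDesc hS.1 i| ≤
      eigDesc hS.1 i * specNorm (((1 : ℝ) / n) • (Zᵀ * Z) - 1) :=
  relative_deviation_low_dim_general X Z hS hX i
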